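/- Let (M,g,J) be a pseudo-Hermitian manifold (J integrable) and f a smooth function. Then the covariant derivative Kähler forms of g and the conformal metric e^{2f}g are related by ∇Ω_{e^{2f}g} = e^{2f}( ∇Ω_g − σ_g(df) ), where σ_g(φ)(x,y;z) := φ(Jx)g(y,z) − φ(Jy)g(x,z) + φ(x)g(Jy,z) − φ(y)g(Jx,z). -/

import Mathlib

/-!
Under `g ↦ e^{2f} g` the Koszul formula picks up the classical conformal correction
`g(∇_z x, w) ↦ e^{2f}(g(∇_z x, w) + df(z) g(x,w) + df(x) g(z,w) − df(w) g(z,x))`.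
Substituting it into `∇Ω`, the `df(z)` terms cancel against the derivative of the factor
`e^{2f}` in `∂_z g(x, Jy)` by the antisymmetry `g(y, Jx) = −g(x, Jy)`, and the remaining
terms form `σ_g(df)`. Coordinates are chosen so that the integrable structure `J` is constant.
-/

open scoped Matrix

/-- The metric as a function of the point: `g_p(x,y) = xᵀ G(p) y`. -/
def gfun {m : ℕ} (G : (Fin m → ℝ) → Matrix (Fin m) (Fin m) ℝ)
    (p x y : Fin m → ℝ) : ℝ := x ⬝ᵥ (G p).mulVec y

/-- Lowered Christoffel term: `g(∇_z x, w)` for constant (coordinate) vector fields,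
given by the Koszul formula `½(∂_z g(x,w) + ∂_x g(z,w) − ∂_w g(z,x))`. -/
noncomputable def Klow {m : ℕ} (G : (Fin m → ℝ) → Matrix (Fin m) (Fin m) ℝ)
    (z x w p : Fin m → ℝ) : ℝ :=
  (1/2) * (fderiv ℝ (fun q => gfun G q x w) p z + fderiv ℝ (fun q => gfun G q z w) p x
    - fderiv ℝ (fun q => gfun G q z x) p w)

/-- `∇Ω(x,y;z)(p) = ∂_z g(x,Jy) − g(∇_z x, Jy) − g(x, J∇_z y)`, for constant vector
fields; here `g(x, J∇_z y) = −g(Jx, ∇_z y)` by Hermitian invariance. -/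
noncomputable def nablaOmegaC {m : ℕ} (G : (Fin m → ℝ) → Matrix (Fin m) (Fin m) ℝ)
    (J : Matrix (Fin m) (Fin m) ℝ) (x y z p : Fin m → ℝ) : ℝ :=
  fderiv ℝ (fun q => gfun G q x (J.mulVec y)) p z
    - Klow G z x (J.mulVec y) p + Klow G z y (J.mulVec x) p

/-- `σ_g(df)(x,y;z) = df(Jx)g(y,z) − df(Jy)g(x,z) + df(x)g(Jy,z) − df(y)g(Jx,z)`. -/
noncomputable def sigmaC {m : ℕ} (G : (Fin m → ℝ) → Matrix (Fin m) (Fin m) ℝ)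
    (J : Matrix (Fin m) (Fin m) ℝ) (f : (Fin m → ℝ) → ℝ) (x y z p : Fin m → ℝ) : ℝ :=
  fderiv ℝ f p (J.mulVec x) * gfun G p y z - fderiv ℝ f p (J.mulVec y) * gfun G p x z
    + fderiv ℝ f p x * gfun G p (J.mulVec y) z - fderiv ℝ f p y * gfun G p (J.mulVec x) z

section Conformal

variable {m : ℕ} (G : (Fin m → ℝ) → Matrix (Fin m) (Fin m) ℝ)

lemma gfun_smul (c : (Fin m → ℝ) → ℝ) (p x y : Fin m → ℝ) :
    gfun (fun q => c q • G q) p x y = c p * gfun G p x y := by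
  simp only [gfun, Matrix.smul_mulVec, dotProduct_smul, smul_eq_mul]

lemma fderiv_exp_two_mul_mul {E : Type*} [NormedAddCommGroup E] [NormedSpace ℝ E]
    {f h : E → ℝ} {p : E} (hf : DifferentiableAt ℝ f p) (hh : DifferentiableAt ℝ h p)
    (z : E) :
    fderiv ℝ (fun q => Real.exp (2 * f q) * h q) p z
      = Real.exp (2 * f p) * (2 * fderiv ℝ f p z * h p + fderiv ℝ h p z) := by
  have hexp : HasFDerivAt (fun q => Real.exp (2 * f q))
      (Real.exp (2 * f p) • (2 : ℝ) • fderiv ℝ f p) p :=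
    (hf.hasFDerivAt.const_mul 2).exp
  rw [show (fun q => Real.exp (2 * f q) * h q) = (fun q => Real.exp (2 * f q)) * h from rfl,
    (hexp.mul hh.hasFDerivAt).fderiv]
  simp only [add_apply, smul_apply, smul_eq_mul]
  ring

variable {G} {f : (Fin m → ℝ) → ℝ}

lemma fderiv_gfun_conformal (hGdiff : ∀ x y, Differentiable ℝ (fun p => gfun G p x y))
    (hf : Differentiable ℝ f) (x y z p : Fin m → ℝ) :
    fderiv ℝ (fun q => gfun (fun q => Real.exp (2 * f q) • G q) q x y) p z
      = Real.exp (2 * f p) * (2 * fderiv ℝ f p z * gfun G p x y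
        + fderiv ℝ (fun q => gfun G q x y) p z) := by
  simp only [gfun_smul]
  exact fderiv_exp_two_mul_mul (hf p) (hGdiff x y p) z

lemma Klow_conformal (hGdiff : ∀ x y, Differentiable ℝ (fun p => gfun G p x y))
    (hf : Differentiable ℝ f) (z x w p : Fin m → ℝ) :
    Klow (fun q => Real.exp (2 * f q) • G q) z x w p
      = Real.exp (2 * f p) * (Klow G z x w p + fderiv ℝ f p z * gfun G p x w
        + fderiv ℝ f p x * gfun G p z w - fderiv ℝ f p w * gfun G p z x) := by
  simp only [Klow, fderiv_gfun_conformal hGdiff hf]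
  ring

end Conformal

lemma gfun_mulVec_antisymm {m : ℕ} {G : (Fin m → ℝ) → Matrix (Fin m) (Fin m) ℝ}
    {J : Matrix (Fin m) (Fin m) ℝ} {p : Fin m → ℝ}
    (hGsymm : ∀ x y, gfun G p x y = gfun G p y x) (hJ2 : J * J = -1)
    (hJG : ∀ x y, gfun G p (J *ᵥ x) (J *ᵥ y) = gfun G p x y) (x y : Fin m → ℝ) :
    gfun G p y (J *ᵥ x) = -gfun G p x (J *ᵥ y) := by
  have hJJ : J *ᵥ (J *ᵥ x) = -x := by
    rw [Matrix.mulVec_mulVec, hJ2, Matrix.neg_mulVec, Matrix.one_mulVec]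
  calc gfun G p y (J *ᵥ x) = gfun G p (J *ᵥ y) (J *ᵥ (J *ᵥ x)) := (hJG _ _).symm
    _ = -gfun G p (J *ᵥ y) x := by
      simp only [hJJ, gfun, Matrix.mulVec_neg, dotProduct_neg]
    _ = -gfun G p x (J *ᵥ y) := by rw [hGsymm]

theorem stmt_17_general {m : ℕ} (G : (Fin m → ℝ) → Matrix (Fin m) (Fin m) ℝ)
    (J : Matrix (Fin m) (Fin m) ℝ) (f : (Fin m → ℝ) → ℝ)
    (hGdiff : ∀ x y, Differentiable ℝ (fun p => gfun G p x y))
    (hf : Differentiable ℝ f)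
    (hGsymm : ∀ p x y, gfun G p x y = gfun G p y x)
    (hJ2 : J * J = -1)
    (hJG : ∀ p x y, gfun G p (J.mulVec x) (J.mulVec y) = gfun G p x y) :
    ∀ x y z p,
      nablaOmegaC (fun q => Real.exp (2 * f q) • G q) J x y z p
        = Real.exp (2 * f p) * (nablaOmegaC G J x y z p - sigmaC G J f x y z p) := by
  intro x y z p
  have hΩ := gfun_mulVec_antisymm (hGsymm p) hJ2 (hJG p) x y
  simp only [nablaOmegaC, sigmaC, Klow_conformal hGdiff hf, fderiv_gfun_conformal hGdiff hf]
  rw [hΩ, hGsymm p z x, hGsymm p z y, hGsymm p z (J *ᵥ x), hGsymm p z (J *ᵥ y)]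
  ring

/-- Conformal change on a pseudo-Hermitian manifold (local coordinates in which the
integrable structure `J` is constant): the covariant derivative Kähler forms of `g` and
`e^{2f}g` are related by `∇Ω_{e^{2f}g} = e^{2f}(∇Ω_g − σ_g(df))`. -/
theorem stmt_17 {m : ℕ} (G : (Fin m → ℝ) → Matrix (Fin m) (Fin m) ℝ)
    (J : Matrix (Fin m) (Fin m) ℝ) (f : (Fin m → ℝ) → ℝ)
    (hGdiff : ∀ x y, Differentiable ℝ (fun p => gfun G p x y))
    (hf : Differentiable ℝ f)
    (hGsymm : ∀ p x y, gfun G p x y = gfun G p y x)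
    (hGnd : ∀ p x, (∀ y, gfun G p x y = 0) → x = 0)
    (hJ2 : J * J = -1)
    (hJG : ∀ p x y, gfun G p (J.mulVec x) (J.mulVec y) = gfun G p x y) :
    ∀ x y z p,
      nablaOmegaC (fun q => Real.exp (2 * f q) • G q) J x y z p
        = Real.exp (2 * f p) * (nablaOmegaC G J x y z p - sigmaC G J f x y z p) :=
  stmt_17_general G J f hGdiff hf hGsymm hJ2 hJG
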